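/- Let f, b : (Fin N → ℤ) → WithBot ℕ have finite supports F and B, with umbra indicators u_f and u_b. Then for every x ∈ ℤ^N: x belongs to the Minkowski sum F + B = {x_F + x_B | x_F ∈ F, x_B ∈ B} if and only if there exists t ∈ ℤ with (u_f ⋆ u_b)(x, t) ≥ 1; equivalently, x ∉ F + B if and only if (u_f ⋆ u_b)(x, t) = 0 for all t ∈ ℤ. -/

import Mathlib

/-! For fixed `y`, the maps `s ↦ u_f (x - y, s)` and `s ↦ u_b (y, s)` are Dirac masses at
`f (x - y)` and `b y` (or vanish when these are `⊥`), so `(u_f ⋆ u_b)(x, t)` counts the `y` with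
`f (x - y) + b y = t`. As `B` is finite this count is finite, hence it is positive for some `t`
exactly when `x - y ∈ F` and `y ∈ B` for some `y`. -/

open scoped Pointwise

open scoped Classical in
/-- The umbra indicator of an image `f : ℤ^N → WithBot ℕ`: `u_f (x, t) = 1` if `t ≥ 0`
and `f x` equals the natural number `t`, and `0` otherwise. -/
noncomputable def umbra {N : ℕ} (f : (Fin N → ℤ) → WithBot ℕ) :
    (Fin N → ℤ) × ℤ → ℝ :=
  fun p => if ∃ n : ℕ, (n : ℤ) = p.2 ∧ f p.1 = (n : WithBot ℕ) then 1 else 0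

/-- Discrete linear convolution of functions on `ℤ^N × ℤ`:
`(u ⋆ v)(x, t) = ∑_{y, s} u (x - y, t - s) * v (y, s)`. -/
noncomputable def conv {N : ℕ} (u v : (Fin N → ℤ) × ℤ → ℝ) :
    (Fin N → ℤ) × ℤ → ℝ :=
  fun p => ∑ᶠ (y : Fin N → ℤ), ∑ᶠ (s : ℤ), u (p.1 - y, p.2 - s) * v (y, s)

def convFiber {N : ℕ} (f b : (Fin N → ℤ) → WithBot ℕ) (x : Fin N → ℤ) (t : ℤ) :
    Set (Fin N → ℤ) :=
  {y | ∃ m n : ℕ, f (x - y) = m ∧ b y = n ∧ (m + n : ℤ) = t}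

lemma finsum_mem_one_eq_ncard {α M : Type*} [AddCommMonoidWithOne M] (s : Set α) :
    ∑ᶠ a ∈ s, (1 : M) = s.ncard := by
  rcases s.finite_or_infinite with hs | hs
  · rw [← finsum_one, Nat.cast_finsum_mem hs, Nat.cast_one]
  · by_cases h : (1 : M) = 0
    · simp [h, ← nsmul_one]
    · rw [hs.ncard, Nat.cast_zero]
      exact finsum_mem_eq_zero_of_infinite (by simpa [Function.support_const h])

section Umbra

variable {N : ℕ}

lemma umbra_of_eq_bot {f : (Fin N → ℤ) → WithBot ℕ} {x : Fin N → ℤ} (hx : f x = ⊥) (t : ℤ) :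
    umbra f (x, t) = 0 :=
  if_neg fun ⟨_, _, h⟩ => WithBot.coe_ne_bot (h.symm.trans hx)

lemma umbra_of_eq_coe {f : (Fin N → ℤ) → WithBot ℕ} {x : Fin N → ℤ} {n : ℕ} (hx : f x = n)
    (t : ℤ) : umbra f (x, t) = if t = n then 1 else 0 := by
  simp [umbra, hx, eq_comm]

lemma ne_bot_of_mem_convFiber {f b : (Fin N → ℤ) → WithBot ℕ} {x y : Fin N → ℤ} {t : ℤ}
    (hy : y ∈ convFiber f b x t) : f (x - y) ≠ ⊥ ∧ b y ≠ ⊥ := by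
  obtain ⟨m, n, hm, hn, -⟩ := hy
  simp [hm, hn]

lemma finsum_umbra_mul_umbra (f b : (Fin N → ℤ) → WithBot ℕ) (x y : Fin N → ℤ) (t : ℤ) :
    ∑ᶠ s, umbra f (x - y, t - s) * umbra b (y, s) = (convFiber f b x t).indicator 1 y := by
  classical
  cases hb : b y using WithBot.recBotCoe with
  | bot =>
    have hy : y ∉ convFiber f b x t := fun h => (ne_bot_of_mem_convFiber h).2 hb
    simp [umbra_of_eq_bot hb, hy]
  | coe n =>
    rw [finsum_eq_single _ (n : ℤ) fun s hs => by simp [umbra_of_eq_coe hb, hs]]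
    simp only [umbra_of_eq_coe hb, if_pos, mul_one]
    cases hf : f (x - y) using WithBot.recBotCoe with
    | bot =>
      have hy : y ∉ convFiber f b x t := fun h => (ne_bot_of_mem_convFiber h).1 hf
      simp [umbra_of_eq_bot hf, hy]
    | coe m =>
      have hy : y ∈ convFiber f b x t ↔ t - n = m := by
        simp [convFiber, hf, hb, Nat.cast_withBot]
        omega
      rw [umbra_of_eq_coe hf, Set.indicator_apply, if_congr hy rfl rfl, Pi.one_apply]

lemma conv_umbra_eq_ncard (f b : (Fin N → ℤ) → WithBot ℕ) (x : Fin N → ℤ) (t : ℤ) :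
    conv (umbra f) (umbra b) (x, t) = (convFiber f b x t).ncard := by
  rw [← finsum_mem_one_eq_ncard, finsum_mem_def]
  exact finsum_congr (finsum_umbra_mul_umbra f b x · t)

lemma mem_add_iff_exists_convFiber_nonempty (f b : (Fin N → ℤ) → WithBot ℕ)
    (x : Fin N → ℤ) :
    x ∈ {x | f x ≠ ⊥} + {y | b y ≠ ⊥} ↔ ∃ t, (convFiber f b x t).Nonempty := by
  constructor
  · rintro ⟨z, hz, y, hy, rfl⟩
    exact ⟨_, y, (f z).unbot hz, (b y).unbot hy, by simp [Nat.cast_withBot],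
      by simp [Nat.cast_withBot], rfl⟩
  · rintro ⟨t, y, hy⟩
    obtain ⟨hf, hb⟩ := ne_bot_of_mem_convFiber hy
    exact ⟨x - y, hf, y, hb, sub_add_cancel x y⟩

end Umbra

theorem mem_minkowski_iff_conv_pos_general (N : ℕ) (f b : (Fin N → ℤ) → WithBot ℕ)
    (hB : {y : Fin N → ℤ | b y ≠ ⊥}.Finite)
    (x : Fin N → ℤ) :
    (x ∈ {x : Fin N → ℤ | f x ≠ ⊥} + {y : Fin N → ℤ | b y ≠ ⊥} ↔
      ∃ t : ℤ, 1 ≤ conv (umbra f) (umbra b) (x, t)) ∧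
    (x ∉ {x : Fin N → ℤ | f x ≠ ⊥} + {y : Fin N → ℤ | b y ≠ ⊥} ↔
      ∀ t : ℤ, conv (umbra f) (umbra b) (x, t) = 0) := by
  have hfin (t : ℤ) : (convFiber f b x t).Finite :=
    hB.subset fun _ hy => (ne_bot_of_mem_convFiber hy).2
  have hpos (t : ℤ) : 1 ≤ conv (umbra f) (umbra b) (x, t) ↔ (convFiber f b x t).Nonempty := by
    rw [conv_umbra_eq_ncard, Nat.one_le_cast]
    exact Set.ncard_pos (hfin t)
  have hzero (t : ℤ) : conv (umbra f) (umbra b) (x, t) = 0 ↔ convFiber f b x t = ∅ := by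
    rw [conv_umbra_eq_ncard, Nat.cast_eq_zero]
    exact Set.ncard_eq_zero (hfin t)
  simp only [mem_add_iff_exists_convFiber_nonempty, hpos, hzero, not_exists,
    Set.not_nonempty_iff_eq_empty, and_self]

/-- A point `x` lies in the Minkowski sum `F + B` of the supports of `f` and `b` if and
only if `(u_f ⋆ u_b)(x, t) ≥ 1` for some `t : ℤ`; equivalently, `x ∉ F + B` iff
`(u_f ⋆ u_b)(x, t) = 0` for all `t : ℤ`. -/
theorem mem_minkowski_iff_conv_pos (N : ℕ) (f b : (Fin N → ℤ) → WithBot ℕ)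
    (hF : {x : Fin N → ℤ | f x ≠ ⊥}.Finite) (hB : {y : Fin N → ℤ | b y ≠ ⊥}.Finite)
    (x : Fin N → ℤ) :
    (x ∈ {x : Fin N → ℤ | f x ≠ ⊥} + {y : Fin N → ℤ | b y ≠ ⊥} ↔
      ∃ t : ℤ, 1 ≤ conv (umbra f) (umbra b) (x, t)) ∧
    (x ∉ {x : Fin N → ℤ | f x ≠ ⊥} + {y : Fin N → ℤ | b y ≠ ⊥} ↔
      ∀ t : ℤ, conv (umbra f) (umbra b) (x, t) = 0) :=
  mem_minkowski_iff_conv_pos_general N f b hB x
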